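/- No graph class with unbounded co-matching-index is 2-subflip-flat. More precisely: for every function M : ℕ → ℕ and every k ∈ ℕ, there is no graph class C with unbounded co-matching-index satisfying: for every G ∈ C and W ⊆ V(G) with |W| ≥ M(m), there is a k-subflip H of G and a subset A ⊆ W with |A| ≥ m such that all distinct u,v ∈ A have distance greater than 2 in H. -/
import Mathlib


/-- `H` is a `k`-flip of `E` on the vertex set `s`. -/
def IsKFlip {V : Type} (k : ℕ) (s : Finset V) (E H : V → V → Prop) : Prop :=
  ∃ (P : V → Fin k) (F : Fin k → Fin k → Prop),
    (∀ i j, F i j ↔ F j i) ∧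
    (∀ u ∈ s, ∀ v ∈ s, u ≠ v →
      (H u v ↔ ((F (P u) (P v) ∧ ¬ E u v) ∨ (¬ F (P u) (P v) ∧ E u v)))) ∧
    (∀ u ∈ s, (H u u ↔ E u u))

/-- `H` is a `k`-subflip of `E` on `s`: a `k`-flip that is also a subgraph. -/
def IsKSubflip {V : Type} (k : ℕ) (s : Finset V) (E H : V → V → Prop) : Prop :=
  IsKFlip k s E H ∧ ∀ u ∈ s, ∀ v ∈ s, H u v → E u v

/-- `DistLe H s r u v`: there is a walk of length at most `r` from `u` to `v` inside `s`. -/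
def DistLe {V : Type} (H : V → V → Prop) (s : Finset V) : ℕ → V → V → Prop
  | 0, u, v => u = v
  | r + 1, u, v => u = v ∨ ∃ w ∈ s, H u w ∧ DistLe H s r w v

/-- A semi-induced co-matching of order `n` in `E` with all vertices satisfying `P`. -/
def SemiInducedCoMatching {V : Type} (E : V → V → Prop) (P : V → Prop) (n : ℕ) : Prop :=
  ∃ a b : Fin n → V, (∀ i, P (a i)) ∧ (∀ i, P (b i)) ∧
    Function.Injective a ∧ Function.Injective b ∧ (∀ i j, a i ≠ b j) ∧
    ∀ i j, E (a i) (b j) ↔ i ≠ j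

/-- No graph class with unbounded co-matching-index is `2`-subflip-flat: for every
margin function `M` and budget `k`, there is no class `C` of (finite) graphs whose
co-matching-index is unbounded and which satisfies the `2`-subflip-flatness property
with margin `M` and budget `k`. -/
theorem unbounded_comatching_not_subflip_flat (M : ℕ → ℕ) (k : ℕ) :
    ¬ ∃ C : Set (Finset ℕ × (ℕ → ℕ → Prop)),
      (∀ G ∈ C, ∀ u v, G.2 u v → G.2 v u) ∧
      -- unbounded co-matching-index
      (∀ t : ℕ, ∃ G ∈ C, SemiInducedCoMatching G.2 (· ∈ G.1) t) ∧
      -- 2-subflip-flatness with margin M and budget k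
      (∀ m : ℕ, ∀ G ∈ C, ∀ W : Finset ℕ, W ⊆ G.1 → M m ≤ W.card →
        ∃ H : ℕ → ℕ → Prop, IsKSubflip k G.1 G.2 H ∧
          ∃ A ⊆ W, m ≤ A.card ∧
            ∀ u ∈ A, ∀ v ∈ A, u ≠ v → ¬ DistLe H G.1 2 u v) := by

  rintro ⟨C, hsym, hunb, hflat⟩
  set m := 2 * k ^ 2 + 1 with hm
  obtain ⟨G, hG, a, b, ha, hb, hainj, hbinj, hab, hE⟩ := hunb (M m)
  -- W = image of a-side
  set W : Finset ℕ := Finset.image a Finset.univ with hW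
  have hWsub : W ⊆ G.1 := by
    intro x hx
    simp only [hW, Finset.mem_image] at hx
    obtain ⟨i, _, rfl⟩ := hx
    exact ha i
  have hWcard : W.card = M m := by
    rw [hW, Finset.card_image_of_injective _ hainj, Finset.card_univ, Fintype.card_fin]
  obtain ⟨H, ⟨⟨P, F, hFsym, hflip, hdiag⟩, hsub⟩, A, hAW, hAcard, hfar⟩ :=
    hflat m G hG W hWsub (le_of_eq hWcard.symm)
  -- index set
  set I : Finset (Fin (M m)) := Finset.univ.filter (fun i => a i ∈ A) with hI
  have hAI : A ⊆ Finset.image a I := by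
    intro x hx
    have hxW := hAW hx
    simp only [hW, Finset.mem_image] at hxW
    obtain ⟨i, _, rfl⟩ := hxW
    exact Finset.mem_image.2 ⟨i, by simp [hI, hx], rfl⟩
  have hIcard : m ≤ I.card :=
    le_trans hAcard (le_trans (Finset.card_le_card hAI) Finset.card_image_le)
  -- k = 0 is impossible
  rcases Nat.eq_zero_or_pos k with hk | hk
  · subst hk
    have : (0:ℕ) < I.card := lt_of_lt_of_le (Nat.succ_pos _) hIcard
    obtain ⟨i, _⟩ := Finset.card_pos.1 this
    exact (P (a i)).elim0
  -- pigeonhole into Fin k × Fin k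
  have hmaps : ∀ i ∈ I, (fun i => (P (a i), P (b i))) i ∈ (Finset.univ : Finset (Fin k × Fin k)) :=
    fun i _ => Finset.mem_univ _
  have hlt : (Finset.univ : Finset (Fin k × Fin k)).card * 2 < I.card := by
    have : (Finset.univ : Finset (Fin k × Fin k)).card = k * k := by
      simp [Finset.card_univ]
    rw [this]
    calc k * k * 2 < 2 * k ^ 2 + 1 := by ring_nf; omega
    _ ≤ I.card := hIcard
  obtain ⟨⟨p, q⟩, -, hfib⟩ :=
    Finset.exists_lt_card_fiber_of_mul_lt_card_of_maps_to hmaps hlt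
  set J := I.filter (fun i => (P (a i), P (b i)) = (p, q)) with hJ
  -- get three distinct indices in J
  obtain ⟨i, hi⟩ := Finset.card_pos.1 (lt_trans (Nat.succ_pos 1) hfib)
  have h2 : 0 < ((J.erase i).erase i).card ∨ True := Or.inr trivial
  have hcard2 : 1 < (J.erase i).card := by
    have := Finset.card_erase_of_mem hi
    omega
  obtain ⟨j, hj⟩ := Finset.card_pos.1 (lt_trans Nat.zero_lt_one hcard2)
  have hcard3 : 0 < ((J.erase i).erase j).card := by
    have := Finset.card_erase_of_mem hj
    omega
  obtain ⟨l, hl⟩ := Finset.card_pos.1 hcard3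
  have hji : j ≠ i := (Finset.mem_erase.1 hj).1
  have hlj : l ≠ j := (Finset.mem_erase.1 hl).1
  have hli : l ≠ i := (Finset.mem_erase.1 ((Finset.mem_erase.1 hl).2)).1
  have hiJ : i ∈ J := hi
  have hjJ : j ∈ J := (Finset.mem_erase.1 hj).2
  have hlJ : l ∈ J := (Finset.mem_erase.1 ((Finset.mem_erase.1 hl).2)).2
  have hmem : ∀ x ∈ J, a x ∈ A ∧ P (a x) = p ∧ P (b x) = q := by
    intro x hx
    simp only [hJ, hI, Finset.mem_filter, Finset.mem_univ, true_and, Prod.mk.injEq] at hx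
    exact ⟨hx.1, hx.2.1, hx.2.2⟩
  obtain ⟨haiA, hpi, hqi⟩ := hmem i hiJ
  obtain ⟨hajA, hpj, hqj⟩ := hmem j hjJ
  obtain ⟨-, hpl, hql⟩ := hmem l hlJ
  -- F p q is false
  have hFpq : ¬ F p q := by
    intro hF
    have hne : a i ≠ b i := hab i i
    have hHi : H (a i) (b i) := by
      rw [hflip (a i) (ha i) (b i) (hb i) hne]
      exact Or.inl ⟨by rwa [hpi, hqi], fun h => (hE i i).1 h rfl⟩
    exact ((hE i i).1 (hsub _ (ha i) _ (hb i) hHi)) rfl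
  -- H (a i) (b l) and H (b l) (a j)
  have hH1 : H (a i) (b l) := by
    rw [hflip (a i) (ha i) (b l) (hb l) (hab i l)]
    exact Or.inr ⟨by rwa [hpi, hql], (hE i l).2 (Ne.symm hli)⟩
  have hH2 : H (b l) (a j) := by
    rw [hflip (b l) (hb l) (a j) (ha j) (Ne.symm (hab j l))]
    refine Or.inr ⟨?_, hsym G hG _ _ ((hE j l).2 hlj.symm)⟩
    rw [hql, hpj]
    exact fun h => hFpq ((hFsym q p).1 h)
  -- distance ≤ 2
  have hdist : DistLe H G.1 2 (a i) (a j) :=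
    Or.inr ⟨b l, hb l, hH1, Or.inr ⟨a j, ha j, hH2, rfl⟩⟩
  exact hfar (a i) haiA (a j) hajA (fun h => hji (hainj h).symm) hdist
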